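/- For every t₀ > 0 there exists a constant c_∞ > 0 such that for all t ≥ t₀ and all η ≥ 0, the hyperbolic heat kernel K_ℍ(t; η) = (√2 · e^{−t/4}/(4πt)^{3/2}) · ∫_η^∞ r·e^{−r²/(4t)}/√(cosh r − cosh η) dr satisfies K_ℍ(t; η) ≤ c_∞·e^{−t/4}. -/

import Mathlib

/-!
Since `cosh r - cosh η ≥ r (r - η) / 2`, the integrand is at most `√2 √r e^{-r²/4t} / √(r - η)`.
Splitting `e^{-r²/4t} = e^{-r²/8t} e^{-r²/8t}` and using `√r e^{-r²/8t} ≤ 1 + √(8t)` and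
`(r - η)² ≤ r²`, it is dominated by `√2 (1 + √(8t))` times the translate by `η` of
`s^{-1/2} e^{-s²/8t}`, whose integral over `(0, ∞)` is
`Γ(1/4) (8t)^{1/4} / 2 ≤ Γ(1/4) (1 + √(8t)) / 2`. Hence `K_ℍ(t; η) ≤ M(t) e^{-t/4}` uniformly in
`η`, with `M(t) = Γ(1/4) (1 + √(8t))² / (4πt)^{3/2}` decreasing in `t`, so `c_∞ = M(t₀)` works.
-/

open MeasureTheory

/-- The heat kernel on the hyperbolic upper half-plane, at time `t > 0` and
hyperbolic distance `η ≥ 0`. -/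
noncomputable def hypHeatKernel (t η : ℝ) : ℝ :=
  (Real.sqrt 2 * Real.exp (-t / 4) / (4 * Real.pi * t) ^ ((3 : ℝ) / 2)) *
    ∫ r in Set.Ioi η, r * Real.exp (-r ^ 2 / (4 * t)) / Real.sqrt (Real.cosh r - Real.cosh η)

open Real Set

lemma cosh_sub_cosh_ge {η r : ℝ} (hη : 0 ≤ η) (hr : η ≤ r) :
    (r ^ 2 - η ^ 2) / 2 ≤ cosh r - cosh η := by
  have h_add := cosh_add ((r + η) / 2) ((r - η) / 2)
  have h_sub := cosh_sub ((r + η) / 2) ((r - η) / 2)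
  rw [show (r + η) / 2 + (r - η) / 2 = r by ring] at h_add
  rw [show (r + η) / 2 - (r - η) / 2 = η by ring] at h_sub
  have h₁ : (r + η) / 2 ≤ sinh ((r + η) / 2) := self_le_sinh_iff.mpr (by linarith)
  have h₂ : (r - η) / 2 ≤ sinh ((r - η) / 2) := self_le_sinh_iff.mpr (by linarith)
  nlinarith [mul_le_mul h₁ h₂ (by linarith) (by linarith)]

lemma sqrt_le_one_add {x : ℝ} (hx : 0 ≤ x) : √x ≤ 1 + x := by
  rw [sqrt_le_left (by linarith)]; nlinarith

lemma mul_exp_neg_sq_div_le_sqrt (x : ℝ) {a : ℝ} (ha : 0 < a) : x * exp (-x ^ 2 / a) ≤ √a := by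
  have hy : x / √a ≤ 1 + x ^ 2 / a := by
    have hsq : (x / √a) ^ 2 = x ^ 2 / a := by rw [div_pow, sq_sqrt ha.le]
    nlinarith [sq_nonneg (x / √a - 1)]
  have hx : x ≤ √a * exp (x ^ 2 / a) := by
    rw [div_le_iff₀' (sqrt_pos.mpr ha)] at hy
    nlinarith [add_one_le_exp (x ^ 2 / a), sqrt_nonneg a]
  calc x * exp (-x ^ 2 / a) ≤ √a * exp (x ^ 2 / a) * exp (-x ^ 2 / a) := by gcongr
    _ = √a := by rw [mul_assoc, ← exp_add, neg_div, add_neg_cancel, exp_zero, mul_one]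

lemma sqrt_mul_exp_neg_sq_div_le {r a : ℝ} (hr : 0 ≤ r) (ha : 0 < a) :
    √r * exp (-r ^ 2 / a) ≤ 1 + √a := by
  calc √r * exp (-r ^ 2 / a) ≤ (1 + r) * exp (-r ^ 2 / a) := by gcongr; exact sqrt_le_one_add hr
    _ = exp (-r ^ 2 / a) + r * exp (-r ^ 2 / a) := by ring
    _ ≤ 1 + √a := by
        gcongr
        · exact exp_le_one_iff.mpr (by rw [neg_div]; exact neg_nonpos.mpr (by positivity))
        · exact mul_exp_neg_sq_div_le_sqrt r ha

lemma setIntegral_Ioi_comp_sub {E : Type*} [NormedAddCommGroup E] [NormedSpace ℝ E]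
    (g : ℝ → E) (a : ℝ) : ∫ x in Ioi a, g (x - a) = ∫ x in Ioi 0, g x := by
  have h := (measurePreserving_sub_right volume a).setIntegral_preimage_emb
    (measurableEmbedding_subRight a) g (Ioi 0)
  rwa [preimage_sub_const_Ioi, zero_add] at h

lemma integrableOn_Ioi_comp_sub_iff {E : Type*} [NormedAddCommGroup E]
    (g : ℝ → E) (a : ℝ) : IntegrableOn (fun x => g (x - a)) (Ioi a) ↔ IntegrableOn g (Ioi 0) := by
  have h := (measurePreserving_sub_right volume a).integrableOn_comp_preimage
    (measurableEmbedding_subRight a) (f := g) (s := Ioi 0)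
  rwa [preimage_sub_const_Ioi, zero_add] at h

lemma integral_rpow_neg_half_mul_exp_neg_mul_sq_le {b : ℝ} (hb : 0 < b) :
    ∫ x in Ioi 0, x ^ (-(1 / 2) : ℝ) * exp (-b * x ^ 2) ≤ Gamma (1 / 4) / 2 * (1 + √b⁻¹) := by
  have h_root : b ^ (-(-(1 / 2) + 1) / 2 : ℝ) = √(√b⁻¹) := by
    rw [sqrt_eq_rpow, sqrt_eq_rpow, ← rpow_mul (inv_nonneg.mpr hb.le), inv_rpow hb.le,
      ← rpow_neg hb.le]
    norm_num
  have h_int := integral_rpow_mul_exp_neg_mul_rpow two_pos (by norm_num : (-1 : ℝ) < -(1 / 2)) hb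
  simp only [rpow_two] at h_int
  rw [h_int, h_root, show (-(1 / 2) + 1) / 2 = (1 / 4 : ℝ) by norm_num, mul_one_div,
    div_mul_eq_mul_div, mul_comm, mul_div_right_comm]
  have := Gamma_pos_of_pos (by norm_num : (0 : ℝ) < 1 / 4)
  gcongr
  exact sqrt_le_one_add (sqrt_nonneg _)

lemma rpow_three_halves {x : ℝ} (hx : 0 ≤ x) : x ^ ((3 : ℝ) / 2) = √x ^ 3 := by
  rw [sqrt_eq_rpow, ← rpow_natCast, ← rpow_mul hx]
  norm_num

lemma hypHeatKernel_integrand_le {t η r : ℝ} (ht : 0 < t) (hη : 0 ≤ η) (hr : η < r) :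
    r * exp (-r ^ 2 / (4 * t)) / √(cosh r - cosh η) ≤
      √2 * (1 + √(8 * t)) * ((r - η) ^ (-(1 / 2) : ℝ) * exp (-(8 * t)⁻¹ * (r - η) ^ 2)) := by
  have hr₀ : 0 < r := hη.trans_lt hr
  have hs : 0 < r - η := sub_pos.mpr hr
  have h_cosh : r * (r - η) / 2 ≤ cosh r - cosh η := by
    nlinarith [cosh_sub_cosh_ge hη hr.le]
  have h_sqrt : √r * √(r - η) / √2 ≤ √(cosh r - cosh η) := by
    rw [← sqrt_mul hr₀.le, ← sqrt_div' _ zero_le_two]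
    exact sqrt_le_sqrt h_cosh
  have h_rpow : (r - η) ^ (-(1 / 2) : ℝ) = (√(r - η))⁻¹ := by
    rw [rpow_neg hs.le, sqrt_eq_rpow]
  have h_exp :
      exp (-r ^ 2 / (4 * t)) ≤ exp (-r ^ 2 / (8 * t)) * exp (-(8 * t)⁻¹ * (r - η) ^ 2) := by
    rw [← exp_add, exp_le_exp, neg_div, neg_div, neg_mul, ← div_eq_inv_mul]
    have : (r - η) ^ 2 / (8 * t) ≤ r ^ 2 / (8 * t) := by gcongr; nlinarith
    have : r ^ 2 / (4 * t) = r ^ 2 / (8 * t) + r ^ 2 / (8 * t) := by field_simp; ring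
    linarith
  calc r * exp (-r ^ 2 / (4 * t)) / √(cosh r - cosh η)
      ≤ r * exp (-r ^ 2 / (4 * t)) / (√r * √(r - η) / √2) := by gcongr
    _ = √2 * √r * exp (-r ^ 2 / (4 * t)) / √(r - η) := by
        have := sqrt_pos.mpr hr₀
        have := sqrt_pos.mpr hs
        field_simp
        rw [sq_sqrt hr₀.le]
    _ ≤ √2 * √r * (exp (-r ^ 2 / (8 * t)) * exp (-(8 * t)⁻¹ * (r - η) ^ 2)) / √(r - η) := by
        gcongr
    _ = √2 * (√r * exp (-r ^ 2 / (8 * t))) *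
          ((r - η) ^ (-(1 / 2) : ℝ) * exp (-(8 * t)⁻¹ * (r - η) ^ 2)) := by
        rw [h_rpow]; ring
    _ ≤ √2 * (1 + √(8 * t)) * ((r - η) ^ (-(1 / 2) : ℝ) * exp (-(8 * t)⁻¹ * (r - η) ^ 2)) := by
        gcongr
        exact sqrt_mul_exp_neg_sq_div_le hr₀.le (by positivity)

noncomputable def hypHeatKernelMajorant (t : ℝ) : ℝ :=
  Gamma (1 / 4) * (1 + √(8 * t)) ^ 2 / (4 * π * t) ^ ((3 : ℝ) / 2)

lemma hypHeatKernelMajorant_pos {t : ℝ} (ht : 0 < t) : 0 < hypHeatKernelMajorant t := by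
  have := Gamma_pos_of_pos (by norm_num : (0 : ℝ) < 1 / 4)
  unfold hypHeatKernelMajorant
  positivity

lemma hypHeatKernel_le_majorant_mul_exp {t η : ℝ} (ht : 0 < t) (hη : 0 ≤ η) :
    hypHeatKernel t η ≤ hypHeatKernelMajorant t * exp (-t / 4) := by
  set C := √2 * (1 + √(8 * t))
  have h_int : IntegrableOn
      (fun r => C * ((r - η) ^ (-(1 / 2) : ℝ) * exp (-(8 * t)⁻¹ * (r - η) ^ 2))) (Ioi η) :=
    ((integrableOn_Ioi_comp_sub_iff (fun s => s ^ (-(1 / 2) : ℝ) * exp (-(8 * t)⁻¹ * s ^ 2))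
      η).mpr (integrableOn_rpow_mul_exp_neg_mul_sq (by positivity) (by norm_num))).const_mul C
  have h_integral : ∫ r in Ioi η, r * exp (-r ^ 2 / (4 * t)) / √(cosh r - cosh η) ≤
      C * (Gamma (1 / 4) / 2 * (1 + √(8 * t))) := by
    calc ∫ r in Ioi η, r * exp (-r ^ 2 / (4 * t)) / √(cosh r - cosh η)
        ≤ ∫ r in Ioi η, C * ((r - η) ^ (-(1 / 2) : ℝ) * exp (-(8 * t)⁻¹ * (r - η) ^ 2)) := by
          refine integral_mono_of_nonneg ?_ h_int ?_ <;>
            filter_upwards [ae_restrict_mem measurableSet_Ioi] with r hr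
          · have : 0 < r := hη.trans_lt hr
            positivity
          · exact hypHeatKernel_integrand_le ht hη hr
      _ = C * ∫ s in Ioi 0, s ^ (-(1 / 2) : ℝ) * exp (-(8 * t)⁻¹ * s ^ 2) := by
          rw [integral_const_mul,
            setIntegral_Ioi_comp_sub (fun s => s ^ (-(1 / 2) : ℝ) * exp (-(8 * t)⁻¹ * s ^ 2))]
      _ ≤ C * (Gamma (1 / 4) / 2 * (1 + √(8 * t))) := by
          gcongr
          simpa using integral_rpow_neg_half_mul_exp_neg_mul_sq_le (b := (8 * t)⁻¹) (by positivity)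
  unfold hypHeatKernel
  calc √2 * exp (-t / 4) / (4 * π * t) ^ ((3 : ℝ) / 2) *
        ∫ r in Ioi η, r * exp (-r ^ 2 / (4 * t)) / √(cosh r - cosh η)
      ≤ √2 * exp (-t / 4) / (4 * π * t) ^ ((3 : ℝ) / 2) *
        (C * (Gamma (1 / 4) / 2 * (1 + √(8 * t)))) := by gcongr
    _ = hypHeatKernelMajorant t * exp (-t / 4) := by
        unfold hypHeatKernelMajorant
        linear_combination exp (-t / 4) * Gamma (1 / 4) * (1 + √(8 * t)) ^ 2 /
          (2 * (4 * π * t) ^ ((3 : ℝ) / 2)) * mul_self_sqrt (zero_le_two : (0 : ℝ) ≤ 2)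

lemma antitoneOn_hypHeatKernelMajorant : AntitoneOn hypHeatKernelMajorant (Ioi 0) := by
  intro s (hs : 0 < s) t (ht : 0 < t) hst
  have h_le : √s ≤ √t := sqrt_le_sqrt hst
  have := Gamma_pos_of_pos (by norm_num : (0 : ℝ) < 1 / 4)
  unfold hypHeatKernelMajorant
  rw [rpow_three_halves (by positivity), rpow_three_halves (by positivity), sqrt_mul' _ ht.le,
    sqrt_mul' _ hs.le, sqrt_mul' _ ht.le, sqrt_mul' _ hs.le, mul_pow, mul_pow,
    div_le_div_iff₀ (by positivity) (by positivity)]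
  have h_lin : (1 + √8 * √t) * √s ≤ (1 + √8 * √s) * √t := by nlinarith
  have key : (1 + √8 * √t) ^ 2 * √s ^ 3 ≤ (1 + √8 * √s) ^ 2 * √t ^ 3 := by
    calc (1 + √8 * √t) ^ 2 * √s ^ 3 = ((1 + √8 * √t) * √s) ^ 2 * √s := by ring
      _ ≤ ((1 + √8 * √s) * √t) ^ 2 * √t := by gcongr
      _ = (1 + √8 * √s) ^ 2 * √t ^ 3 := by ring
  have hc : 0 ≤ Gamma (1 / 4) * √(4 * π) ^ 3 := by positivity
  linear_combination mul_le_mul_of_nonneg_left key hc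

/-- For every `t₀ > 0` there is `c_∞ > 0` with
`K_ℍ(t; η) ≤ c_∞ e^{−t/4}` for all `t ≥ t₀` and `η ≥ 0`. -/
theorem hypHeatKernel_large_time_bound (t₀ : ℝ) (ht₀ : 0 < t₀) :
    ∃ c > (0 : ℝ), ∀ t : ℝ, t₀ ≤ t → ∀ η : ℝ, 0 ≤ η →
      hypHeatKernel t η ≤ c * Real.exp (-t / 4) := by
  refine ⟨hypHeatKernelMajorant t₀, hypHeatKernelMajorant_pos ht₀, fun t ht η hη => ?_⟩
  have ht' : 0 < t := ht₀.trans_le ht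
  calc hypHeatKernel t η ≤ hypHeatKernelMajorant t * exp (-t / 4) :=
        hypHeatKernel_le_majorant_mul_exp ht' hη
    _ ≤ hypHeatKernelMajorant t₀ * exp (-t / 4) := by
        gcongr
        exact antitoneOn_hypHeatKernelMajorant ht₀ ht' ht
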